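/- Suppose 𝒬 ⊆ 𝒫(Θ) allows for Dirac measures, D(Q,Π) ≤ M for all Q ∈ 𝒬, and the losses (L_n) are measurable, bounded below, lower semicontinuous and coercive with L_n → L pointwise, L lower semicontinuous, and inf_Θ L ≥ limsup_n inf_Θ L_n > −∞. For each n let Q_n minimise T_n(Q) = n·J_{L_n}(Q) + (1/β)·D(Q,Π) over 𝒬. If A ⊆ Θ is measurable with inf_A L > inf_Θ L and liminf_n inf_A L_n > inf_Θ L, then Q_n(A) → 0 as n → ∞. -/

import Mathlib

/-
Comparing the minimiser `Qn n` with an element of `𝒬` whose expected loss is within `ε / n` of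
`inf L n` (which exists because `𝒬` allows for Dirac measures) gives
`n ∫ L n d(Qn n) ≤ n inf L n + M / β`. On the other hand
`∫ L n d(Qn n) ≥ inf L n + (inf_A L n - inf L n) (Qn n)(A)`, and the hypotheses on `limsup` and
`liminf` keep the gap `inf_A L n - inf L n` above some `δ > 0` for large `n`, so
`(Qn n)(A) ≤ M / (β δ n)`.
-/

open MeasureTheory Filter Topology
open scoped ENNReal NNReal

/-- The loss functional `J_f(ν) := ∫ f dν`, valued in the extended reals; for `f`
bounded below it takes values in `(-∞, ∞]`. -/
noncomputable def J {Θ : Type*} [MeasurableSpace Θ] (f : Θ → ℝ) (ν : Measure Θ) : EReal :=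
  ((∫⁻ θ, ENNReal.ofReal (f θ) ∂ν : ℝ≥0∞) : EReal) -
    ((∫⁻ θ, ENNReal.ofReal (-f θ) ∂ν : ℝ≥0∞) : EReal)

/-- The GVI objective `T n β L D Π Q := n · J_L(Q) + (1/β) · D(Q, Π)`. -/
noncomputable def T {Θ : Type*} [MeasurableSpace Θ] (n : ℕ) (β : ℝ) (L : Θ → ℝ)
    (D : ProbabilityMeasure Θ → ProbabilityMeasure Θ → ℝ)
    (prior Q : ProbabilityMeasure Θ) : EReal :=
  ((n : ℝ) : EReal) * J L (Q : Measure Θ) + ((1 / β * D Q prior : ℝ) : EReal)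

/-- `f : Θ → ℝ` is coercive if for every `c` there is a compact set outside of which `f > c`. -/
def Coercive {Θ : Type*} [TopologicalSpace Θ] (f : Θ → ℝ) : Prop :=
  ∀ c : ℝ, ∃ K : Set Θ, IsCompact K ∧ ∀ θ ∉ K, c < f θ

/-- The mixture `a·μ + (1−a)·ν` of two probability measures. -/
noncomputable def mix {Θ : Type*} [MeasurableSpace Θ] (μ ν : ProbabilityMeasure Θ) (a : ℝ)
    (ha0 : 0 ≤ a) (ha1 : a ≤ 1) : ProbabilityMeasure Θ :=
  ⟨ENNReal.ofReal a • (μ : Measure Θ) + ENNReal.ofReal (1 - a) • (ν : Measure Θ), by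
    constructor
    simp only [Measure.coe_add, Pi.add_apply, Measure.smul_apply, smul_eq_mul, measure_univ,
      mul_one]
    rw [← ENNReal.ofReal_add ha0 (by linarith)]
    norm_num⟩

/-- The Dirac probability measure at `θ`. -/
noncomputable def diracProb {Θ : Type*} [MeasurableSpace Θ] (θ : Θ) : ProbabilityMeasure Θ :=
  ⟨Measure.dirac θ, inferInstance⟩

/-- `𝒬` allows for Dirac measures: it is weak*-closed and the infimum of `J_f` over `𝒬`
equals the infimum of `f` over `Θ`, for every bounded below, lsc, coercive `f`. -/
def AllowsDiracs {Θ : Type*} [MeasurableSpace Θ] [TopologicalSpace Θ] [OpensMeasurableSpace Θ]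
    (𝒬 : Set (ProbabilityMeasure Θ)) : Prop :=
  IsClosed 𝒬 ∧ ∀ f : Θ → ℝ, (∃ b, ∀ θ, b ≤ f θ) → LowerSemicontinuous f → Coercive f →
    (⨅ ν : 𝒬, J f (ν.1 : Measure Θ)) = ((⨅ θ, f θ : ℝ) : EReal)

open Set

section J

variable {Θ : Type*} [MeasurableSpace Θ] {f : Θ → ℝ} {ν : Measure Θ}

theorem J_eq_integral (hf : Integrable f ν) : J f ν = ((∫ θ, f θ ∂ν : ℝ) : EReal) := by
  rw [J, integral_eq_lintegral_pos_part_sub_lintegral_neg_part hf, EReal.coe_sub,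
    EReal.coe_ennreal_toReal hf.lintegral_lt_top.ne, EReal.coe_ennreal_toReal]
  exact hf.neg.lintegral_lt_top.ne

theorem integrable_of_J_ne_top [IsFiniteMeasure ν] (hm : Measurable f)
    (hb : BddBelow (range f)) (hJ : J f ν ≠ ⊤) : Integrable f ν := by
  obtain ⟨b, hb⟩ := hb
  have hneg : ∫⁻ θ, ENNReal.ofReal (-f θ) ∂ν ≠ ⊤ := by
    exact ne_top_of_le_ne_top (lintegral_const_lt_top (μ := ν) ENNReal.ofReal_ne_top).ne
      (lintegral_mono fun θ => ENNReal.ofReal_le_ofReal (neg_le_neg (hb (mem_range_self θ))))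
  have hpos : ∫⁻ θ, ENNReal.ofReal (f θ) ∂ν ≠ ⊤ := by
    rintro htop
    rw [J, htop, EReal.coe_ennreal_top, ← EReal.coe_ennreal_toReal hneg, EReal.top_sub_coe] at hJ
    exact hJ rfl
  have hpos' : Integrable (fun θ => max (f θ) 0) ν :=
    (lintegral_ofReal_ne_top_iff_integrable (by fun_prop)
      (ae_of_all _ fun θ => le_max_right (f θ) 0)).mp (by simpa [ENNReal.ofReal_max] using hpos)
  have hneg' : Integrable (fun θ => max (-f θ) 0) ν :=
    (lintegral_ofReal_ne_top_iff_integrable (by fun_prop)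
      (ae_of_all _ fun θ => le_max_right (-f θ) 0)).mp (by simpa [ENNReal.ofReal_max] using hneg)
  convert hpos'.sub hneg' using 1
  ext θ
  exact (max_zero_sub_max_neg_zero_eq_self (f θ)).symm

end J

theorem add_mul_measureReal_le_integral {Θ : Type*} [MeasurableSpace Θ] {μ : Measure Θ}
    [IsProbabilityMeasure μ] {f : Θ → ℝ} (hf : Integrable f μ) {A : Set Θ}
    (hA : MeasurableSet A) {a c : ℝ} (hc : ∀ θ, c ≤ f θ) (ha : ∀ θ ∈ A, a ≤ f θ) :
    c + (a - c) * μ.real A ≤ ∫ θ, f θ ∂μ := by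
  have hA' := setIntegral_ge_of_const_le_real hA (measure_ne_top μ A) ha hf.integrableOn
  have hAc := setIntegral_ge_of_const_le_real hA.compl (measure_ne_top μ Aᶜ)
    (fun θ _ => hc θ) hf.integrableOn
  rw [probReal_compl_eq_one_sub hA] at hAc
  rw [← integral_add_compl hA hf]
  linear_combination hA' + hAc

section Minimiser

variable {Θ : Type*} [MeasurableSpace Θ] {𝒬 : Set (ProbabilityMeasure Θ)} {f : Θ → ℝ}
  {D : ProbabilityMeasure Θ → ProbabilityMeasure Θ → ℝ} {Pr Q₀ : ProbabilityMeasure Θ}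
  {n : ℕ} {β M : ℝ}

theorem coe_mul_J_le_of_isMinOn (hβ : 0 < β) (hD₀ : 0 ≤ D Q₀ Pr) (hD : ∀ Q ∈ 𝒬, D Q Pr ≤ M)
    (hQ₀ : IsMinOn (T n β f D Pr) 𝒬 Q₀) {Q : ProbabilityMeasure Θ} (hQ : Q ∈ 𝒬) :
    ((n : ℝ) : EReal) * J f Q₀ ≤ ((n : ℝ) : EReal) * J f Q + ((M / β : ℝ) : EReal) :=
  calc ((n : ℝ) : EReal) * J f Q₀ ≤ T n β f D Pr Q₀ :=
        le_add_of_nonneg_right (EReal.coe_nonneg.mpr (by positivity))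
    _ ≤ T n β f D Pr Q := isMinOn_iff.mp hQ₀ Q hQ
    _ ≤ ((n : ℝ) : EReal) * J f Q + ((M / β : ℝ) : EReal) := by
        refine add_le_add_right (EReal.coe_le_coe_iff.mpr ?_) _
        rw [one_div_mul_eq_div]
        exact div_le_div_of_nonneg_right (hD Q hQ) hβ.le

theorem integrable_and_mul_integral_le_of_isMinOn (hm : Measurable f) (hb : BddBelow (range f))
    (hn : 0 < n) (hβ : 0 < β) (hD₀ : 0 ≤ D Q₀ Pr) (hD : ∀ Q ∈ 𝒬, D Q Pr ≤ M)
    (hQ₀ : IsMinOn (T n β f D Pr) 𝒬 Q₀) {Q : ProbabilityMeasure Θ} (hQ : Q ∈ 𝒬)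
    (hfQ : Integrable f Q) :
    Integrable f Q₀ ∧ n * ∫ θ, f θ ∂(Q₀ : Measure Θ) ≤ n * ∫ θ, f θ ∂(Q : Measure Θ) + M / β := by
  have h := coe_mul_J_le_of_isMinOn hβ hD₀ hD hQ₀ hQ
  rw [J_eq_integral hfQ, ← EReal.coe_mul, ← EReal.coe_add] at h
  have hQ₀fin : J f Q₀ ≠ ⊤ := by
    rintro htop
    rw [htop, EReal.coe_mul_top_of_pos (by exact_mod_cast hn)] at h
    exact (EReal.coe_lt_top _).not_ge h
  have hfQ₀ := integrable_of_J_ne_top hm hb hQ₀fin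
  rw [J_eq_integral hfQ₀, ← EReal.coe_mul] at h
  exact ⟨hfQ₀, EReal.coe_le_coe_iff.mp h⟩

theorem integrable_and_mul_integral_le_of_isMinOn_of_iInf_J_le (hm : Measurable f)
    (hb : BddBelow (range f)) (hn : 0 < n) (hβ : 0 < β) (hD₀ : 0 ≤ D Q₀ Pr)
    (hD : ∀ Q ∈ 𝒬, D Q Pr ≤ M) (hQ₀ : IsMinOn (T n β f D Pr) 𝒬 Q₀) {c : ℝ}
    (hc : (⨅ Q : 𝒬, J f (Q.1 : Measure Θ)) ≤ c) :
    Integrable f Q₀ ∧ n * ∫ θ, f θ ∂(Q₀ : Measure Θ) ≤ n * c + M / β := by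
  have hn' : (0 : ℝ) < n := by exact_mod_cast hn
  have hε : ∀ ε > 0, Integrable f Q₀ ∧ n * ∫ θ, f θ ∂(Q₀ : Measure Θ) ≤ n * c + M / β + ε := by
    intro ε hε
    have hlt : (⨅ Q : 𝒬, J f (Q.1 : Measure Θ)) < ((c + ε / n : ℝ) : EReal) :=
      hc.trans_lt (EReal.coe_lt_coe_iff.mpr (by linarith [div_pos hε hn']))
    obtain ⟨⟨Q, hQ⟩, hQlt⟩ := iInf_lt_iff.mp hlt
    have hfQ := integrable_of_J_ne_top hm hb (hQlt.trans (EReal.coe_lt_top _)).ne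
    rw [J_eq_integral hfQ, EReal.coe_lt_coe_iff] at hQlt
    obtain ⟨hfQ₀, hle⟩ := integrable_and_mul_integral_le_of_isMinOn hm hb hn hβ hD₀ hD hQ₀ hQ hfQ
    refine ⟨hfQ₀, hle.trans ?_⟩
    have := mul_le_mul_of_nonneg_left hQlt.le hn'.le
    rw [mul_add, mul_div_cancel₀ ε hn'.ne'] at this
    linarith
  exact ⟨(hε 1 one_pos).1, le_of_forall_pos_le_add fun ε hε' => (hε ε hε').2⟩

theorem mul_measureReal_le_of_isMinOn (hm : Measurable f) (hb : BddBelow (range f))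
    (hn : 0 < n) (hβ : 0 < β) (hD₀ : 0 ≤ D Q₀ Pr) (hD : ∀ Q ∈ 𝒬, D Q Pr ≤ M)
    (hQ₀ : IsMinOn (T n β f D Pr) 𝒬 Q₀) {c : ℝ} (hcf : ∀ θ, c ≤ f θ)
    (hc : (⨅ Q : 𝒬, J f (Q.1 : Measure Θ)) ≤ c) {A : Set Θ} (hA : MeasurableSet A) {a : ℝ}
    (ha : ∀ θ ∈ A, a ≤ f θ) :
    n * ((a - c) * (Q₀ : Measure Θ).real A) ≤ M / β := by
  obtain ⟨hfQ₀, hle⟩ :=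
    integrable_and_mul_integral_le_of_isMinOn_of_iInf_J_le hm hb hn hβ hD₀ hD hQ₀ hc
  have := mul_le_mul_of_nonneg_left (add_mul_measureReal_le_integral hfQ₀ hA hcf ha)
    (Nat.cast_nonneg n : (0 : ℝ) ≤ n)
  rw [mul_add] at this
  linarith

end Minimiser

theorem exists_pos_eventually_add_le_of_limsup_le_of_lt_liminf {ι : Type*} {l : Filter ι}
    {x y : ι → ℝ} {m : ℝ} (hx : limsup (fun i => (x i : EReal)) l ≤ m)
    (hy : (m : EReal) < liminf (fun i => (y i : EReal)) l) :
    ∃ δ > 0, ∀ᶠ i in l, x i + δ ≤ y i := by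
  obtain ⟨u, hmu, hu⟩ := EReal.exists_between_coe_real hy
  obtain ⟨v, hmv, hvu⟩ := exists_between (EReal.coe_lt_coe_iff.mp hmu)
  refine ⟨u - v, sub_pos.mpr hvu, ?_⟩
  filter_upwards [eventually_lt_of_limsup_lt (hx.trans_lt (EReal.coe_lt_coe_iff.mpr hmv)),
    eventually_lt_of_lt_liminf hu] with i hxi hyi
  linarith [EReal.coe_lt_coe_iff.mp hxi, EReal.coe_lt_coe_iff.mp hyi]

theorem tendsto_zero_of_eventually_mul_le {p : ℕ → ℝ} {K : ℝ} (hp : ∀ n, 0 ≤ p n)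
    (h : ∀ᶠ n in atTop, n * p n ≤ K) : Tendsto p atTop (𝓝 0) := by
  refine squeeze_zero' (Eventually.of_forall hp) ?_ (tendsto_const_div_atTop_nhds_zero_nat K)
  filter_upwards [h, eventually_gt_atTop 0] with n hn hpos
  rw [le_div_iff₀ (by exact_mod_cast hpos)]
  linarith

theorem gvi_asymptotic_consistency_general {Θ : Type*} [TopologicalSpace Θ]
    [MeasurableSpace Θ] [BorelSpace Θ]
    (𝒬 : Set (ProbabilityMeasure Θ)) (h𝒬 : AllowsDiracs 𝒬)
    (L : ℕ → Θ → ℝ) (Llim : Θ → ℝ)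
    (hmeas : ∀ n, Measurable (L n)) (hbdd : ∀ n, ∃ b : ℝ, ∀ θ, b ≤ L n θ)
    (hlsc : ∀ n, LowerSemicontinuous (L n)) (hcoer : ∀ n, Coercive (L n))
    (hinf1 : Filter.limsup (fun n => ((⨅ θ : Θ, L n θ : ℝ) : EReal)) atTop ≤
      ((⨅ θ : Θ, Llim θ : ℝ) : EReal))
    (D : ProbabilityMeasure Θ → ProbabilityMeasure Θ → ℝ)
    (hDnn : ∀ P Q : ProbabilityMeasure Θ, 0 ≤ D P Q)
    (Pr : ProbabilityMeasure Θ) (M β : ℝ) (hβ : 0 < β)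
    (hDbdd : ∀ Q ∈ 𝒬, D Q Pr ≤ M)
    (Qn : ℕ → ProbabilityMeasure Θ)
    (hQn : ∀ n, Qn n ∈ 𝒬 ∧ ∀ Q ∈ 𝒬, T n β (L n) D Pr (Qn n) ≤ T n β (L n) D Pr Q)
    (A : Set Θ) (hA : MeasurableSet A)
    (hAliminf : ((⨅ θ : Θ, Llim θ : ℝ) : EReal) <
      Filter.liminf (fun n => ((⨅ θ : A, L n (θ : Θ) : ℝ) : EReal)) atTop) :
    Tendsto (fun n => ((Qn n) A : ℝ)) atTop (nhds 0) := by
  obtain ⟨δ, hδ, hgap⟩ := exists_pos_eventually_add_le_of_limsup_le_of_lt_liminf hinf1 hAliminf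
  refine tendsto_zero_of_eventually_mul_le (K := M / β / δ) (fun n => NNReal.coe_nonneg _) ?_
  filter_upwards [hgap, eventually_gt_atTop 0] with n hgap hn
  have hb : BddBelow (range (L n)) := (hbdd n).imp fun b hb => forall_mem_range.mpr hb
  have hbound := mul_measureReal_le_of_isMinOn (hmeas n) hb hn hβ (hDnn _ _) hDbdd
    (isMinOn_iff.mpr (hQn n).2) (ciInf_le hb) (h𝒬.2 _ (hbdd n) (hlsc n) (hcoer n)).le hA
    (a := ⨅ θ : A, L n θ) fun θ hθ =>
      ciInf_le (hb.mono (range_comp_subset_range _ _)) (⟨θ, hθ⟩ : A)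
  rw [ProbabilityMeasure.measureReal_eq_coe_coeFn] at hbound
  rw [le_div_iff₀ hδ]
  calc (n : ℝ) * (Qn n A : ℝ) * δ
      ≤ n * (Qn n A : ℝ) * ((⨅ θ : A, L n θ) - ⨅ θ, L n θ) :=
        mul_le_mul_of_nonneg_left (le_sub_iff_add_le'.mpr hgap) (by positivity)
    _ = n * (((⨅ θ : A, L n θ) - ⨅ θ, L n θ) * (Qn n A : ℝ)) := by ring
    _ ≤ M / β := hbound

/-- Theorem: asymptotic consistency: If `𝒬` allows for Dirac measures, the
divergence is bounded by `M` on `𝒬`, the losses converge pointwise to a lsc limit `L∞` with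
`inf_Θ L∞ ≥ limsup_n inf_Θ L_n > −∞`, and `Q n` minimises `T_n` over `𝒬`, then for every
measurable `A` with `inf_A L∞ > inf_Θ L∞` and `liminf_n inf_A L_n > inf_Θ L∞`,
`Q n (A) → 0`. -/
theorem gvi_asymptotic_consistency {Θ : Type*} [TopologicalSpace Θ] [PolishSpace Θ]
    [MeasurableSpace Θ] [BorelSpace Θ] [Nonempty Θ]
    (𝒬 : Set (ProbabilityMeasure Θ)) (h𝒬 : AllowsDiracs 𝒬)
    (L : ℕ → Θ → ℝ) (Llim : Θ → ℝ)
    (hmeas : ∀ n, Measurable (L n)) (hbdd : ∀ n, ∃ b : ℝ, ∀ θ, b ≤ L n θ)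
    (hlsc : ∀ n, LowerSemicontinuous (L n)) (hcoer : ∀ n, Coercive (L n))
    (hLlimlsc : LowerSemicontinuous Llim)
    (hconv : ∀ θ : Θ, Tendsto (fun n => L n θ) atTop (nhds (Llim θ)))
    (hinf1 : Filter.limsup (fun n => ((⨅ θ : Θ, L n θ : ℝ) : EReal)) atTop ≤
      ((⨅ θ : Θ, Llim θ : ℝ) : EReal))
    (hinf2 : (⊥ : EReal) < Filter.limsup (fun n => ((⨅ θ : Θ, L n θ : ℝ) : EReal)) atTop)
    (D : ProbabilityMeasure Θ → ProbabilityMeasure Θ → ℝ)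
    (hDnn : ∀ P Q : ProbabilityMeasure Θ, 0 ≤ D P Q)
    (Pr : ProbabilityMeasure Θ) (M β : ℝ) (hM : 0 < M) (hβ : 0 < β)
    (hDbdd : ∀ Q ∈ 𝒬, D Q Pr ≤ M)
    (Qn : ℕ → ProbabilityMeasure Θ)
    (hQn : ∀ n, Qn n ∈ 𝒬 ∧ ∀ Q ∈ 𝒬, T n β (L n) D Pr (Qn n) ≤ T n β (L n) D Pr Q)
    (A : Set Θ) (hA : MeasurableSet A)
    (hAinf : (⨅ θ : Θ, Llim θ) < ⨅ θ : A, Llim (θ : Θ))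
    (hAliminf : ((⨅ θ : Θ, Llim θ : ℝ) : EReal) <
      Filter.liminf (fun n => ((⨅ θ : A, L n (θ : Θ) : ℝ) : EReal)) atTop) :
    Tendsto (fun n => ((Qn n) A : ℝ)) atTop (nhds 0) :=
  gvi_asymptotic_consistency_general 𝒬 h𝒬 L Llim hmeas hbdd hlsc hcoer hinf1 D hDnn Pr M β hβ hDbdd
    Qn hQn A hA hAliminf
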